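/- Let $d \ge 1$. There exists a constant $\kappa > 0$ depending only on $d$ such that for all grid-steps $h_1, \dots, h_d > 0$, all $p \in [1, \infty]$, and all $u \in L^p(\mathbb{R}^d)$, $\|u - Ku\|_p \;\le\; \kappa \, \sup\{\, \|\tau_w u - u\|_p \;:\; w \in \mathbb{R}^d, \; |w_i| \le h_i \text{ for all } i \,\}$, where $K$ is the hat-kernel operator $(Ku)(x) = \sum_{k} \psi_k(x) \|\psi_k\|_{L^1}^{-1} \int \psi_k u$ and $(\tau_w u)(x) = u(x + w)$. -/

import Mathlib

open BigOperators MeasureTheory ENNReal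

/-- The canonical hat function on `ℝ`, centered at `0` with support `[-1,1]`. -/
noncomputable def chi (t : ℝ) : ℝ := max 0 (1 - |t|)

/-!
The hat functions `ψ_k` form a partition of unity and `∫ ψ_k = ∏ hᵢ`, so
`u x - K u x = ∑ₖ ψ_k(x) (∏ hᵢ)⁻¹ ∫ ψ_k(y) (u x - u y) dy`. The product `ψ_k(x) ψ_k(y)` vanishes
unless `|xᵢ - yᵢ| < 2hᵢ` for all `i`, so `|u x - K u x|` is at most `4^d` times the mean of
`|u (x + w) - u x|` over the box `|wᵢ| ≤ 2hᵢ`. Minkowski's integral inequality turns this into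
`‖u - K u‖_p ≤ 4^d sup_{|wᵢ| ≤ 2hᵢ} ‖τ_w u - u‖_p`, and splitting `w = w/2 + w/2` bounds the right
side by twice the supremum over `|wᵢ| ≤ hᵢ`; hence `κ = 2 · 4^d`.
-/

lemma chi_nonneg (t : ℝ) : 0 ≤ chi t := le_max_left _ _

lemma chi_le_one (t : ℝ) : chi t ≤ 1 :=
  max_le zero_le_one (sub_le_self _ (abs_nonneg t))

lemma abs_lt_one_of_chi_ne_zero {t : ℝ} (h : chi t ≠ 0) : |t| < 1 := by
  by_contra! ht
  exact h (max_eq_left (by linarith))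

@[fun_prop]
lemma continuous_chi : Continuous chi := by
  unfold chi; fun_prop

lemma chi_sub_floor_add_chi_sub_floor_sub_one (t : ℝ) :
    chi (t - ⌊t⌋) + chi (t - (⌊t⌋ + 1)) = 1 := by
  have h₀ := Int.floor_le t
  have h₁ := Int.lt_floor_add_one t
  rw [chi, chi, abs_of_nonneg (by linarith), abs_of_neg (by linarith),
    max_eq_right (by linarith), max_eq_right (by linarith)]
  ring

lemma eq_floor_or_eq_floor_add_one_of_chi_sub_ne_zero {t : ℝ} {k : ℤ} (h : chi (t - k) ≠ 0) :
    k = ⌊t⌋ ∨ k = ⌊t⌋ + 1 := by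
  obtain ⟨h₁, h₂⟩ := abs_lt.1 (abs_lt_one_of_chi_ne_zero h)
  have : ⌊t⌋ ≤ k := Int.floor_le_iff.2 (by linarith)
  have : k < ⌊t⌋ + 2 := by
    rw [← Int.cast_lt (R := ℝ)]; push_cast; linarith [Int.lt_floor_add_one t]
  omega

lemma integral_chi : ∫ t, chi t = 1 := by
  have hsupp : Function.support chi ⊆ Set.Ioc (-1) 1 := fun t ht => by
    obtain ⟨h₁, h₂⟩ := abs_lt.1 (abs_lt_one_of_chi_ne_zero ht)
    exact ⟨h₁, h₂.le⟩
  rw [← setIntegral_eq_integral_of_forall_compl_eq_zero fun t ht =>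
      Function.notMem_support.1 fun h => ht (hsupp h),
    ← intervalIntegral.integral_of_le (by norm_num),
    ← intervalIntegral.integral_add_adjacent_intervals (b := 0)
      (continuous_chi.intervalIntegrable _ _) (continuous_chi.intervalIntegrable _ _)]
  have hl : ∫ t in (-1 : ℝ)..0, chi t = ∫ t in (-1 : ℝ)..0, (1 + t) := by
    refine intervalIntegral.integral_congr fun t ht => ?_
    rw [Set.uIcc_of_le (by norm_num)] at ht
    rw [chi, abs_of_nonpos ht.2, max_eq_right (by linarith [ht.1])]
    ring
  have hr : ∫ t in (0 : ℝ)..1, chi t = ∫ t in (0 : ℝ)..1, (1 - t) := by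
    refine intervalIntegral.integral_congr fun t ht => ?_
    rw [Set.uIcc_of_le (by norm_num)] at ht
    rw [chi, abs_of_nonneg ht.1, max_eq_right (by linarith [ht.2])]
  rw [hl, hr,
    intervalIntegral.integral_add intervalIntegrable_const intervalIntegral.intervalIntegrable_id,
    intervalIntegral.integral_sub intervalIntegrable_const intervalIntegral.intervalIntegrable_id]
  norm_num [integral_id]

lemma setOf_forall_abs_le_eq_pi {ι : Type*} (r : ι → ℝ) :
    {w : ι → ℝ | ∀ i, |w i| ≤ r i} = Set.univ.pi fun i => Set.Icc (-r i) (r i) := by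
  ext w
  simp only [Set.mem_ofPred_eq, Set.mem_pi, Set.mem_univ, true_implies, Set.mem_Icc, abs_le]

variable {ι : Type*} [Fintype ι]

noncomputable def gridHat (h : ι → ℝ) (k : ι → ℤ) (x : ι → ℝ) : ℝ :=
  ∏ i, chi (x i / h i - k i)

noncomputable def hatOp (h : ι → ℝ) (u : (ι → ℝ) → ℝ) (x : ι → ℝ) : ℝ :=
  ∑ᶠ k, gridHat h k x * (∏ i, h i)⁻¹ * ∫ y, gridHat h k y * u y

lemma gridHat_nonneg (h : ι → ℝ) (k : ι → ℤ) (x : ι → ℝ) : 0 ≤ gridHat h k x :=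
  Finset.prod_nonneg fun _ _ => chi_nonneg _

lemma gridHat_le_one (h : ι → ℝ) (k : ι → ℤ) (x : ι → ℝ) : gridHat h k x ≤ 1 :=
  Finset.prod_le_one (fun _ _ => chi_nonneg _) fun _ _ => chi_le_one _

lemma continuous_gridHat (h : ι → ℝ) (k : ι → ℤ) : Continuous (gridHat h k) := by
  unfold gridHat; fun_prop

lemma chi_ne_zero_of_gridHat_ne_zero {h : ι → ℝ} {k : ι → ℤ} {x : ι → ℝ}
    (hx : gridHat h k x ≠ 0) (i : ι) : chi (x i / h i - k i) ≠ 0 :=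
  fun h0 => hx (Finset.prod_eq_zero (Finset.mem_univ i) h0)

lemma abs_sub_lt_of_gridHat_ne_zero {h : ι → ℝ} (hh : ∀ i, 0 < h i) {k : ι → ℤ}
    {x : ι → ℝ} (hx : gridHat h k x ≠ 0) (i : ι) : |x i - k i * h i| < h i := by
  have h₁ := abs_lt_one_of_chi_ne_zero (chi_ne_zero_of_gridHat_ne_zero hx i)
  have h₂ : x i - k i * h i = (x i / h i - k i) * h i := by field_simp [(hh i).ne']
  rw [h₂, abs_mul, abs_of_pos (hh i)]
  exact mul_lt_of_lt_one_left (hh i) h₁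

lemma hasCompactSupport_gridHat {h : ι → ℝ} (hh : ∀ i, 0 < h i) (k : ι → ℤ) :
    HasCompactSupport (gridHat h k) := by
  refine .of_support_subset_isCompact (isCompact_univ_pi fun i =>
    isCompact_Icc (a := k i * h i - h i) (b := k i * h i + h i)) fun x hx i _ => ?_
  obtain ⟨h₁, h₂⟩ := abs_lt.1 (abs_sub_lt_of_gridHat_ne_zero hh hx i)
  exact ⟨by linarith, by linarith⟩

lemma integral_gridHat {h : ι → ℝ} (hh : ∀ i, 0 < h i) (k : ι → ℤ) :
    ∫ x, gridHat h k x = ∏ i, h i := by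
  calc ∫ x, gridHat h k x = ∏ i, ∫ t, chi (t / h i - k i) :=
        integral_fintype_prod_eq_prod fun i t => chi (t / h i - k i)
    _ = ∏ i, h i := Finset.prod_congr rfl fun i _ => by
      rw [Measure.integral_comp_div (fun s => chi (s - k i)), integral_sub_right_eq_self,
        integral_chi, abs_of_pos (hh i), smul_eq_mul, mul_one]

noncomputable def gridNbhd [DecidableEq ι] (h x : ι → ℝ) : Finset (ι → ℤ) :=
  Fintype.piFinset fun i => {⌊x i / h i⌋, ⌊x i / h i⌋ + 1}

lemma mem_gridNbhd_of_gridHat_ne_zero [DecidableEq ι] {h x : ι → ℝ} {k : ι → ℤ}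
    (hx : gridHat h k x ≠ 0) : k ∈ gridNbhd h x := by
  simpa [gridNbhd] using fun i =>
    eq_floor_or_eq_floor_add_one_of_chi_sub_ne_zero (chi_ne_zero_of_gridHat_ne_zero hx i)

lemma sum_gridNbhd_gridHat [DecidableEq ι] (h x : ι → ℝ) :
    ∑ k ∈ gridNbhd h x, gridHat h k x = 1 := by
  calc ∑ k ∈ gridNbhd h x, gridHat h k x
      = ∏ i, ∑ j ∈ {⌊x i / h i⌋, ⌊x i / h i⌋ + 1}, chi (x i / h i - j) :=
        (Finset.prod_univ_sum (fun i => {⌊x i / h i⌋, ⌊x i / h i⌋ + 1})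
          fun i j => chi (x i / h i - j)).symm
    _ = 1 := Finset.prod_eq_one fun i _ => by
      rw [Finset.sum_pair (by omega)]
      exact_mod_cast chi_sub_floor_add_chi_sub_floor_sub_one (x i / h i)

section HatOperator

variable {h : ι → ℝ} {u : (ι → ℝ) → ℝ}

lemma hatOp_eq_sum [DecidableEq ι] (x : ι → ℝ) :
    hatOp h u x = ∑ k ∈ gridNbhd h x,
      gridHat h k x * (∏ i, h i)⁻¹ * ∫ y, gridHat h k y * u y :=
  finsum_eq_sum_of_support_subset _ fun _ hk =>
    mem_gridNbhd_of_gridHat_ne_zero fun h0 => hk (by simp [h0])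

lemma sub_hatOp_eq_sum [DecidableEq ι] (hh : ∀ i, 0 < h i) (hu : LocallyIntegrable u)
    (x : ι → ℝ) :
    u x - hatOp h u x = ∑ k ∈ gridNbhd h x,
      gridHat h k x * (∏ i, h i)⁻¹ * ∫ y, gridHat h k y * (u x - u y) := by
  have hP : ∏ i, h i ≠ 0 := Finset.prod_ne_zero_iff.2 fun i _ => (hh i).ne'
  have hterm : ∀ k, gridHat h k x * (∏ i, h i)⁻¹ * ∫ y, gridHat h k y * (u x - u y) =
      gridHat h k x * u x - gridHat h k x * (∏ i, h i)⁻¹ * ∫ y, gridHat h k y * u y := by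
    intro k
    have hψ : Integrable (gridHat h k) :=
      (continuous_gridHat h k).integrable_of_hasCompactSupport (hasCompactSupport_gridHat hh k)
    have hψu : Integrable (fun y => gridHat h k y * u y) :=
      hu.integrable_smul_left_of_hasCompactSupport (continuous_gridHat h k)
        (hasCompactSupport_gridHat hh k)
    simp_rw [mul_sub]
    rw [integral_sub (hψ.mul_const _) hψu, integral_mul_const, integral_gridHat hh]
    field_simp
  rw [Finset.sum_congr rfl fun k _ => hterm k, Finset.sum_sub_distrib, ← Finset.sum_mul,
    sum_gridNbhd_gridHat, one_mul, hatOp_eq_sum]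

lemma enorm_integral_gridHat_mul_sub_le (hh : ∀ i, 0 < h i) {k : ι → ℤ} {x : ι → ℝ}
    (hx : gridHat h k x ≠ 0) (u : (ι → ℝ) → ℝ) :
    ‖∫ y, gridHat h k y * (u x - u y)‖ₑ ≤
      ∫⁻ w in {w | ∀ i, |w i| ≤ 2 * h i}, ‖u (x + w) - u x‖ₑ := by
  rw [← integral_add_left_eq_self _ x, setOf_forall_abs_le_eq_pi,
    ← lintegral_indicator (MeasurableSet.univ_pi fun _ => measurableSet_Icc)]
  refine (enorm_integral_le_lintegral_enorm _).trans (lintegral_mono fun w => ?_)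
  by_cases hw : gridHat h k (x + w) = 0
  · simp [hw]
  have hmem : w ∈ Set.univ.pi fun i => Set.Icc (-(2 * h i)) (2 * h i) := fun i _ => by
    have h₁ := abs_lt.1 (abs_sub_lt_of_gridHat_ne_zero hh hx i)
    have h₂ := abs_lt.1 (abs_sub_lt_of_gridHat_ne_zero hh hw i)
    simp only [Pi.add_apply] at h₂
    constructor <;> linarith [h₁.1, h₁.2, h₂.1, h₂.2]
  rw [Set.indicator_of_mem hmem, enorm_mul, enorm_sub_rev]
  refine mul_le_of_le_one_left' ?_
  rw [Real.enorm_of_nonneg (gridHat_nonneg h k _)]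
  exact ENNReal.ofReal_le_one.2 (gridHat_le_one h k _)

lemma enorm_sub_hatOp_le (hh : ∀ i, 0 < h i) (hu : LocallyIntegrable u) (x : ι → ℝ) :
    ‖u x - hatOp h u x‖ₑ ≤
      ENNReal.ofReal (∏ i, h i)⁻¹ * ∫⁻ w in {w | ∀ i, |w i| ≤ 2 * h i}, ‖u (x + w) - u x‖ₑ := by
  classical
  set J := ∫⁻ w in {w | ∀ i, |w i| ≤ 2 * h i}, ‖u (x + w) - u x‖ₑ
  have hP : 0 ≤ (∏ i, h i)⁻¹ := inv_nonneg.2 (Finset.prod_nonneg fun i _ => (hh i).le)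
  calc ‖u x - hatOp h u x‖ₑ
      ≤ ∑ k ∈ gridNbhd h x,
          ‖gridHat h k x * (∏ i, h i)⁻¹ * ∫ y, gridHat h k y * (u x - u y)‖ₑ := by
        rw [sub_hatOp_eq_sum hh hu]; exact enorm_sum_le _ _
    _ ≤ ∑ k ∈ gridNbhd h x,
          ENNReal.ofReal (gridHat h k x) * (ENNReal.ofReal (∏ i, h i)⁻¹ * J) :=
        Finset.sum_le_sum fun k _ => by
          by_cases hk : gridHat h k x = 0
          · simp [hk]
          rw [enorm_mul, enorm_mul, Real.enorm_of_nonneg (gridHat_nonneg h k x),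
            Real.enorm_of_nonneg hP, mul_assoc]
          gcongr
          exact enorm_integral_gridHat_mul_sub_le hh hk u
    _ = ENNReal.ofReal (∏ i, h i)⁻¹ * J := by
        rw [← Finset.sum_mul, ← ENNReal.ofReal_sum_of_nonneg fun k _ => gridHat_nonneg h k x,
          sum_gridNbhd_gridHat, ENNReal.ofReal_one, one_mul]

end HatOperator

section Minkowski

variable {α β : Type*} [MeasurableSpace α] [MeasurableSpace β] {μ : Measure α} {ν : Measure β}

lemma rpow_lintegral_le_lintegral_rpow [IsProbabilityMeasure ν] {f : β → ℝ≥0∞}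
    (hf : AEMeasurable f ν) {q : ℝ} (hq : 1 ≤ q) :
    (∫⁻ w, f w ∂ν) ^ q ≤ ∫⁻ w, f w ^ q ∂ν := by
  have h := eLpNorm'_le_eLpNorm'_mul_rpow_measure_univ zero_lt_one hq hf.aestronglyMeasurable
  simp only [eLpNorm', measure_univ, one_rpow, mul_one, rpow_one, enorm_eq_self, div_one] at h
  calc (∫⁻ w, f w ∂ν) ^ q ≤ ((∫⁻ w, f w ^ q ∂ν) ^ (1 / q)) ^ q :=
        rpow_le_rpow h (by linarith)
    _ = ∫⁻ w, f w ^ q ∂ν := by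
        rw [← rpow_mul, one_div_mul_cancel (by linarith), rpow_one]

theorem eLpNorm_lintegral_le_of_ae_le [SFinite μ] [IsProbabilityMeasure ν]
    {F : α → β → ℝ≥0∞} (hF : Measurable (Function.uncurry F)) {p : ℝ≥0∞} (hp : 1 ≤ p)
    {S : ℝ≥0∞} (hS : ∀ᵐ w ∂ν, eLpNorm (fun x => F x w) p μ ≤ S) :
    eLpNorm (fun x => ∫⁻ w, F x w ∂ν) p μ ≤ S := by
  rcases eq_or_ne p ∞ with rfl | hp_top
  · have hae : ∀ᵐ x ∂μ, ∀ᵐ w ∂ν, F x w ≤ S := by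
      rw [Measure.ae_ae_comm (p := fun x w => F x w ≤ S) (measurableSet_le hF measurable_const)]
      filter_upwards [hS] with w hw
      rw [eLpNorm_exponent_top] at hw
      filter_upwards [ae_le_eLpNormEssSup (f := fun x => F x w) (μ := μ)] with x hx
      exact hx.trans hw
    rw [eLpNorm_exponent_top]
    refine essSup_le_of_ae_le _ ?_
    filter_upwards [hae] with x hx
    calc ‖∫⁻ w, F x w ∂ν‖ₑ ≤ ∫⁻ _, S ∂ν := lintegral_mono_ae hx
      _ = S := by simp
  · have hp0 : p ≠ 0 := (zero_lt_one.trans_le hp).ne'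
    have hq : 1 ≤ p.toReal := by
      rw [← ENNReal.toReal_one]; exact ENNReal.toReal_mono hp_top hp
    have hq0 : 0 < p.toReal := by linarith
    have hSq : ∀ᵐ w ∂ν, ∫⁻ x, F x w ^ p.toReal ∂μ ≤ S ^ p.toReal := by
      filter_upwards [hS] with w hw
      rw [eLpNorm_eq_eLpNorm' hp0 hp_top] at hw
      have h := rpow_le_rpow hw hq0.le
      rw [← lintegral_rpow_enorm_eq_rpow_eLpNorm' hq0] at h
      simpa only [enorm_eq_self] using h
    rw [eLpNorm_eq_eLpNorm' hp0 hp_top, ← ENNReal.rpow_le_rpow_iff hq0,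
      ← lintegral_rpow_enorm_eq_rpow_eLpNorm' hq0]
    calc ∫⁻ x, ‖∫⁻ w, F x w ∂ν‖ₑ ^ p.toReal ∂μ
        ≤ ∫⁻ x, ∫⁻ w, F x w ^ p.toReal ∂ν ∂μ := lintegral_mono fun x =>
          rpow_lintegral_le_lintegral_rpow (hF.comp measurable_prodMk_left).aemeasurable hq
      _ = ∫⁻ w, ∫⁻ x, F x w ^ p.toReal ∂μ ∂ν :=
          lintegral_lintegral_swap (hF.pow_const _).aemeasurable
      _ ≤ ∫⁻ _, S ^ p.toReal ∂ν := lintegral_mono_ae hSq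
      _ = S ^ p.toReal := by simp

end Minkowski

theorem eLpNorm_comp_add_sub_le {G E : Type*} [AddGroup G] [MeasurableSpace G]
    [MeasurableAdd G] [NormedAddCommGroup E] {μ : Measure G} [μ.IsAddRightInvariant]
    {p : ℝ≥0∞} (hp : 1 ≤ p) {u : G → E} (hu : AEStronglyMeasurable u μ) (v w : G) :
    eLpNorm (fun x => u (x + (v + w)) - u x) p μ ≤
      eLpNorm (fun x => u (x + w) - u x) p μ + eLpNorm (fun x => u (x + v) - u x) p μ := by
  set g := fun x => u (x + w) - u x
  have hτ : ∀ a : G, AEStronglyMeasurable (fun x => u (x + a)) μ := fun a =>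
    hu.comp_measurePreserving (measurePreserving_add_right μ a)
  have hg : AEStronglyMeasurable g μ := (hτ w).sub hu
  have hsplit : (fun x => u (x + (v + w)) - u x) = fun x => g (x + v) + (u (x + v) - u x) := by
    funext x; simp only [g, add_assoc]; abel
  rw [hsplit, ← eLpNorm_comp_measurePreserving hg (measurePreserving_add_right μ v)]
  exact eLpNorm_add_le (hg.comp_measurePreserving (measurePreserving_add_right μ v))
    ((hτ v).sub hu) hp

section HatOperatorEstimate

open scoped NNReal
open ProbabilityTheory

variable {h : ι → ℝ} {u : (ι → ℝ) → ℝ} {p : ℝ≥0∞}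

lemma volume_setOf_forall_abs_le_two_mul (hh : ∀ i, 0 < h i) :
    volume {w : ι → ℝ | ∀ i, |w i| ≤ 2 * h i} =
      4 ^ Fintype.card ι * ENNReal.ofReal (∏ i, h i) := by
  rw [setOf_forall_abs_le_eq_pi, volume_pi_pi,
    ENNReal.ofReal_prod_of_nonneg fun i _ => (hh i).le, ← Finset.card_univ,
    ← Finset.prod_const, ← Finset.prod_mul_distrib]
  refine Finset.prod_congr rfl fun i _ => ?_
  rw [Real.volume_Icc, show 2 * h i - -(2 * h i) = 4 * h i by ring,
    ENNReal.ofReal_mul (by norm_num), ENNReal.ofReal_ofNat]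

theorem eLpNorm_sub_hatOp_le_of_measurable (hh : ∀ i, 0 < h i) (hp : 1 ≤ p)
    (hum : Measurable u) (hu : LocallyIntegrable u) {S : ℝ≥0∞}
    (hS : ∀ w ∈ {w : ι → ℝ | ∀ i, |w i| ≤ 2 * h i},
      eLpNorm (fun x => u (x + w) - u x) p volume ≤ S) :
    eLpNorm (fun x => u x - hatOp h u x) p volume ≤ 4 ^ Fintype.card ι * S := by
  have hWm : MeasurableSet {w : ι → ℝ | ∀ i, |w i| ≤ 2 * h i} := by
    rw [setOf_forall_abs_le_eq_pi]; exact MeasurableSet.univ_pi fun _ => measurableSet_Icc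
  set W := {w : ι → ℝ | ∀ i, |w i| ≤ 2 * h i}
  have hP : 0 < ∏ i, h i := Finset.prod_pos fun i _ => hh i
  have hW := volume_setOf_forall_abs_le_two_mul hh
  have h4 : (4 : ℝ≥0∞) ^ Fintype.card ι ≠ 0 := pow_ne_zero _ (by norm_num)
  have h4' : (4 : ℝ≥0∞) ^ Fintype.card ι ≠ ∞ := pow_ne_top (by norm_num)
  have : IsProbabilityMeasure (volume[|W]) := cond_isProbabilityMeasure_of_finite
    (by rw [hW]; exact mul_ne_zero h4 (ENNReal.ofReal_pos.2 hP).ne')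
    (by rw [hW]; exact mul_ne_top h4' ofReal_ne_top)
  have hpt : ∀ x, ‖u x - hatOp h u x‖ₑ ≤
      ((4 : ℝ≥0) ^ Fintype.card ι : ℝ≥0) * ‖∫⁻ w, ‖u (x + w) - u x‖ₑ ∂volume[|W]‖ₑ := by
    intro x
    rw [enorm_eq_self, ProbabilityTheory.cond, lintegral_smul_measure, smul_eq_mul,
      ENNReal.coe_pow, ENNReal.coe_ofNat, ← mul_assoc, hW, ENNReal.mul_inv (.inl h4) (.inl h4'),
      ← mul_assoc, ENNReal.mul_inv_cancel h4 h4', one_mul, ← ENNReal.ofReal_inv_of_pos hP]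
    exact_mod_cast enorm_sub_hatOp_le hh hu x
  calc eLpNorm (fun x => u x - hatOp h u x) p volume
      ≤ ((4 : ℝ≥0) ^ Fintype.card ι : ℝ≥0) •
          eLpNorm (fun x => ∫⁻ w, ‖u (x + w) - u x‖ₑ ∂volume[|W]) p volume :=
        eLpNorm_le_nnreal_smul_eLpNorm_of_ae_le_mul' (ae_of_all _ hpt) p
    _ ≤ ((4 : ℝ≥0) ^ Fintype.card ι : ℝ≥0) • S := by
        gcongr
        exact eLpNorm_lintegral_le_of_ae_le (by fun_prop) hp ((ae_cond_mem hWm).mono hS)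
    _ = 4 ^ Fintype.card ι * S := by
        rw [ENNReal.smul_def, smul_eq_mul, ENNReal.coe_pow, ENNReal.coe_ofNat]

lemma hatOp_congr_ae {v : (ι → ℝ) → ℝ} (huv : u =ᵐ[volume] v) : hatOp h u = hatOp h v := by
  funext x
  refine finsum_congr fun k => ?_
  rw [integral_congr_ae (huv.mono fun y hy => by rw [hy])]

theorem eLpNorm_sub_hatOp_le (hh : ∀ i, 0 < h i) (hp : 1 ≤ p) (hu : MemLp u p volume)
    {S : ℝ≥0∞} (hS : ∀ w ∈ {w : ι → ℝ | ∀ i, |w i| ≤ 2 * h i},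
      eLpNorm (fun x => u (x + w) - u x) p volume ≤ S) :
    eLpNorm (fun x => u x - hatOp h u x) p volume ≤ 4 ^ Fintype.card ι * S := by
  set v := hu.1.mk u
  have huv : u =ᵐ[volume] v := hu.1.ae_eq_mk
  have htrans : ∀ w, (fun x => u (x + w) - u x) =ᵐ[volume] fun x => v (x + w) - v x := fun w =>
    ((measurePreserving_add_right volume w).quasiMeasurePreserving.ae_eq_comp huv).sub huv
  rw [hatOp_congr_ae huv,
    eLpNorm_congr_ae (g := fun x => v x - hatOp h v x) (huv.mono fun x hx => by rw [hx])]
  exact eLpNorm_sub_hatOp_le_of_measurable hh hp hu.1.stronglyMeasurable_mk.measurable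
    ((hu.ae_eq huv).locallyIntegrable hp) fun w hw =>
      (eLpNorm_congr_ae (htrans w)).symm.trans_le (hS w hw)

lemma eLpNorm_comp_add_sub_le_two_mul_iSup (hp : 1 ≤ p) (hu : AEStronglyMeasurable u volume)
    {w : ι → ℝ} (hw : ∀ i, |w i| ≤ 2 * h i) :
    eLpNorm (fun x => u (x + w) - u x) p volume ≤
      2 * ⨆ v ∈ {v : ι → ℝ | ∀ i, |v i| ≤ h i}, eLpNorm (fun x => u (x + v) - u x) p volume := by
  obtain ⟨v, rfl, hv⟩ : ∃ v : ι → ℝ, w = v + v ∧ ∀ i, |v i| ≤ h i :=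
    ⟨fun i => w i / 2, funext fun i => (add_halves _).symm, fun i => by
      rw [abs_div, abs_two]; linarith [hw i]⟩
  have hle := le_biSup (fun v => eLpNorm (fun x => u (x + v) - u x) p volume)
    (show v ∈ {v : ι → ℝ | ∀ i, |v i| ≤ h i} from hv)
  rw [two_mul]
  exact (eLpNorm_comp_add_sub_le hp hu v v).trans (add_le_add hle hle)

end HatOperatorEstimate

theorem stmt16_general (d : ℕ) :
    ∃ κ : NNReal, 0 < κ ∧
      ∀ (hstep : Fin d → ℝ), (∀ i, 0 < hstep i) →
      ∀ (ψ : (Fin d → ℤ) → (Fin d → ℝ) → ℝ),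
        (∀ k x, ψ k x = ∏ i : Fin d, chi (x i / hstep i - (k i : ℝ))) →
      ∀ (K : ((Fin d → ℝ) → ℝ) → (Fin d → ℝ) → ℝ),
        (∀ u x, K u x = ∑ᶠ k : Fin d → ℤ,
            ψ k x * (∏ i : Fin d, hstep i)⁻¹ * ∫ y : Fin d → ℝ, ψ k y * u y) →
      ∀ (p : ℝ≥0∞), 1 ≤ p →
      ∀ u : (Fin d → ℝ) → ℝ, MemLp u p volume →
        eLpNorm (fun x => u x - K u x) p volume
          ≤ (κ : ℝ≥0∞) * ⨆ w ∈ {w : Fin d → ℝ | ∀ i, |w i| ≤ hstep i},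
              eLpNorm (fun x => u (x + w) - u x) p volume := by
  refine ⟨2 * 4 ^ d, by positivity, fun h hh ψ hψ K hK p hp u hu => ?_⟩
  have hKu : K u = hatOp h u := funext fun x => by simp only [hK, hψ]; rfl
  rw [hKu]
  calc eLpNorm (fun x => u x - hatOp h u x) p volume
      ≤ 4 ^ Fintype.card (Fin d) * (2 * ⨆ w ∈ {w : Fin d → ℝ | ∀ i, |w i| ≤ h i},
          eLpNorm (fun x => u (x + w) - u x) p volume) :=
        eLpNorm_sub_hatOp_le hh hp hu fun w hw =>
          eLpNorm_comp_add_sub_le_two_mul_iSup hp hu.1 hw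
    _ = _ := by push_cast; rw [Fintype.card_fin]; ring

/-- There is a constant `κ > 0` depending only on `d` such that
for all grid-steps, all `p ∈ [1, ∞]` and all `u ∈ L^p(ℝ^d)`,
`‖u - Ku‖_p ≤ κ sup{‖τ_w u - u‖_p : |wᵢ| ≤ hᵢ}`, where `K` is the hat-kernel
operator and `τ_w` the translation by `w`. -/
theorem stmt16 (d : ℕ) (hd : 1 ≤ d) :
    ∃ κ : NNReal, 0 < κ ∧
      ∀ (hstep : Fin d → ℝ), (∀ i, 0 < hstep i) →
      ∀ (ψ : (Fin d → ℤ) → (Fin d → ℝ) → ℝ),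
        (∀ k x, ψ k x = ∏ i : Fin d, chi (x i / hstep i - (k i : ℝ))) →
      ∀ (K : ((Fin d → ℝ) → ℝ) → (Fin d → ℝ) → ℝ),
        (∀ u x, K u x = ∑ᶠ k : Fin d → ℤ,
            ψ k x * (∏ i : Fin d, hstep i)⁻¹ * ∫ y : Fin d → ℝ, ψ k y * u y) →
      ∀ (p : ℝ≥0∞), 1 ≤ p →
      ∀ u : (Fin d → ℝ) → ℝ, MemLp u p volume →
        eLpNorm (fun x => u x - K u x) p volume
          ≤ (κ : ℝ≥0∞) * ⨆ w ∈ {w : Fin d → ℝ | ∀ i, |w i| ≤ hstep i},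
              eLpNorm (fun x => u (x + w) - u x) p volume :=
  stmt16_general d
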